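/- arXiv:1804.07462 — 3 statements merged into one kernel-verified Lean document; each statement's English description precedes it below -/
import Mathlib

section
/- Let n ≥ 2, q ≥ 2, and 1 ≤ τ ≤ n be integers and let f : ℝ → ℝ be a real polynomial of degree at most τ such that f(1 - 2ℓ/n) ≥ 0 for every integer ℓ with 0 ≤ ℓ ≤ n, and f₀ > 0, where f₀ := q^{-n} ∑_{ℓ=0}^{n} C(n,ℓ)(q-1)^ℓ f(1 - 2ℓ/n). Then every nonempty orthogonal array C ⊆ H(n,q) of strength τ has cardinality |C| ≥ f(1)/f₀. -/
/-- `C` is an orthogonal array of strength `τ` in the Hamming space `H(n,q)`: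
for every set of `τ` coordinates and every tuple of values, the number of rows of `C`
matching those values on those coordinates equals `|C|/q^τ`. -/
def IsOrthogonalArray (n q τ : ℕ) (C : Finset (Fin n → Fin q)) : Prop :=
  ∀ S : Finset (Fin n), S.card = τ → ∀ a : Fin n → Fin q,
    (((C.filter fun x => ∀ i ∈ S, x i = a i).card : ℝ)) = (C.card : ℝ) / (q : ℝ) ^ τ

/-- The zeroth Krawtchouk coefficient
`f₀ = q^{-n} ∑_{ℓ=0}^n C(n,ℓ)(q-1)^ℓ f(1 - 2ℓ/n)`. -/
noncomputable def fZeroHamming (n q : ℕ) (f : Polynomial ℝ) : ℝ :=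
  (∑ ℓ ∈ Finset.range (n + 1),
      (n.choose ℓ : ℝ) * ((q : ℝ) - 1) ^ ℓ * f.eval (1 - 2 * (ℓ : ℝ) / n)) / (q : ℝ) ^ n

lemma lp_choose_basis : ∀ (d : ℕ) (g : Polynomial ℝ), g.natDegree ≤ d →
    ∃ c : ℕ → ℝ, ∀ a : ℕ, g.eval (a : ℝ) = ∑ k ∈ Finset.range (d + 1), c k * (a.choose k : ℝ) := by
  intro d
  induction d with
  | zero =>
    intro g hg
    refine ⟨fun _ => g.coeff 0, fun a => ?_⟩
    conv_lhs => rw [Polynomial.eq_C_of_natDegree_le_zero hg]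
    simp
  | succ d ih =>
    intro g hg
    set L := g.coeff (d + 1) with hL
    set h := g - Polynomial.C L * descPochhammer ℝ (d + 1) with hh
    have hdp : (descPochhammer ℝ (d + 1)).natDegree = d + 1 := descPochhammer_natDegree ℝ (d + 1)
    have hmonic : (descPochhammer ℝ (d + 1)).Monic := monic_descPochhammer ℝ (d + 1)
    have hdh : h.natDegree ≤ d := by
      rw [Polynomial.natDegree_le_iff_coeff_eq_zero]
      intro N hN
      rw [hh]
      simp only [Polynomial.coeff_sub, Polynomial.coeff_C_mul]
      rcases eq_or_lt_of_le (Nat.succ_le_of_lt hN) with hN1 | hN1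
      · have hco : (descPochhammer ℝ (d + 1)).coeff (d + 1) = 1 := by
          have := hmonic.coeff_natDegree
          rwa [hdp] at this
        rw [← hN1, hco, mul_one, hL, sub_self]
      · rw [Polynomial.coeff_eq_zero_of_natDegree_lt (lt_of_le_of_lt hg hN1),
          Polynomial.coeff_eq_zero_of_natDegree_lt (by rw [hdp]; exact hN1),
          mul_zero, sub_self]
    obtain ⟨c, hc⟩ := ih h hdh
    refine ⟨fun k => if k = d + 1 then L * (Nat.factorial (d + 1) : ℝ) else c k, fun a => ?_⟩
    have hsum : (∑ k ∈ Finset.range (d+1), (if k = d + 1 then L * (Nat.factorial (d + 1) : ℝ) else c k) * (a.choose k : ℝ)) = ∑ k ∈ Finset.range (d+1), c k * (a.choose k : ℝ) :=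
      Finset.sum_congr rfl (fun k hk => by
        rw [if_neg (show ¬ k = d + 1 by rw [Finset.mem_range] at hk; omega)])
    rw [Finset.sum_range_succ]
    simp only [if_true, eq_self_iff_true, if_pos]
    rw [hsum]
    have hdesc : (descPochhammer ℝ (d + 1)).eval (a : ℝ) = (a.descFactorial (d + 1) : ℝ) :=
      descPochhammer_eval_eq_descFactorial ℝ a (d + 1)
    have hgev : g.eval (a : ℝ) = h.eval (a : ℝ) + L * (a.descFactorial (d + 1) : ℝ) := by
      rw [hh]; simp [hdesc]
    rw [hgev, hc a, Nat.descFactorial_eq_factorial_mul_choose]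
    push_cast
    ring

lemma lp_sum_choose (n k : ℕ) (hk : k ≤ n) (x : ℝ) :
    ∑ ℓ ∈ Finset.range (n + 1), (n.choose ℓ : ℝ) * x ^ ℓ * ((n - ℓ).choose k : ℝ)
      = (n.choose k : ℝ) * (x + 1) ^ (n - k) := by
  have hterm : ∀ ℓ ≤ n, n.choose ℓ * (n - ℓ).choose k = n.choose k * ((n - k).choose ℓ) := by
    intro ℓ hℓ
    rcases le_or_gt k (n - ℓ) with h | h
    · have h1 : n.choose (n - ℓ) * (n - ℓ).choose k = n.choose k * (n - k).choose (n - ℓ - k) :=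
        Nat.choose_mul h
      rw [Nat.choose_symm hℓ] at h1
      rw [h1]
      congr 1
      rw [Nat.sub_right_comm]
      exact Nat.choose_symm (by omega)
    · rw [Nat.choose_eq_zero_of_lt h, Nat.choose_eq_zero_of_lt (show n - k < ℓ by omega),
        mul_zero, mul_zero]
  have step1 : ∑ ℓ ∈ Finset.range (n + 1), (n.choose ℓ : ℝ) * x ^ ℓ * ((n - ℓ).choose k : ℝ)
      = (n.choose k : ℝ) * ∑ ℓ ∈ Finset.range (n + 1), ((n - k).choose ℓ : ℝ) * x ^ ℓ := by
    rw [Finset.mul_sum]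
    refine Finset.sum_congr rfl fun ℓ hℓ => ?_
    rw [Finset.mem_range] at hℓ
    have h2 : (n.choose ℓ : ℝ) * ((n - ℓ).choose k : ℝ) = (n.choose k : ℝ) * ((n - k).choose ℓ : ℝ) := by
      exact_mod_cast congrArg (Nat.cast : ℕ → ℝ) (hterm ℓ (by omega))
    linear_combination x ^ ℓ * h2
  rw [step1]
  congr 1
  rw [← Finset.sum_subset (Finset.range_subset_range.mpr (by omega : n - k + 1 ≤ n + 1))
    (fun ℓ _ hℓ => by
      rw [Finset.mem_range, not_lt] at hℓ
      rw [Nat.choose_eq_zero_of_lt (by omega), Nat.cast_zero, zero_mul])]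
  rw [add_pow]
  refine Finset.sum_congr rfl fun ℓ hℓ => ?_
  rw [one_pow]
  ring


/-- The linear programming bound for minimal designs (orthogonal arrays) in Hamming space. -/
theorem lp_bound_minimal_orthogonal_arrays
    (n q τ : ℕ) (hn : 2 ≤ n) (hq : 2 ≤ q) (hτ1 : 1 ≤ τ) (hτn : τ ≤ n)
    (f : Polynomial ℝ) (hdeg : f.natDegree ≤ τ)
    (hB1 : ∀ ℓ : ℕ, ℓ ≤ n → 0 ≤ f.eval (1 - 2 * (ℓ : ℝ) / n))
    (hf0 : 0 < fZeroHamming n q f)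
    (C : Finset (Fin n → Fin q)) (hCne : C.Nonempty)
    (hC : IsOrthogonalArray n q τ C) :
    f.eval 1 / fZeroHamming n q f ≤ (C.card : ℝ) := by
  classical
  have hq0 : (0:ℝ) < (q:ℝ) := by exact_mod_cast (by omega : 0 < q)
  have hqne : (q:ℝ) ≠ 0 := ne_of_gt hq0
  have hn0 : (n:ℝ) ≠ 0 := by exact_mod_cast (by omega : n ≠ 0)
  -- Step A: strength monotonicity
  have strength : ∀ m : ℕ, ∀ S : Finset (Fin n), S.card + m = τ → ∀ a : Fin n → Fin q,
      ((C.filter fun x => ∀ i ∈ S, x i = a i).card : ℝ) = (C.card : ℝ) / (q:ℝ) ^ S.card := by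
    intro m
    induction m with
    | zero =>
      intro S hS a
      rw [hC S (by omega) a, show S.card = τ from by omega]
    | succ m ih =>
      intro S hS a
      have hSn : S.card < n := by omega
      have hcompl : (Sᶜ : Finset (Fin n)).Nonempty := by
        rw [← Finset.card_pos, Finset.card_compl, Fintype.card_fin]
        omega
      obtain ⟨j, hj⟩ := hcompl
      have hjS : j ∉ S := Finset.mem_compl.mp hj
      have hfib := Finset.card_eq_sum_card_fiberwise
        (f := fun x : Fin n → Fin q => x j) (t := (Finset.univ : Finset (Fin q)))
        (s := C.filter fun x => ∀ i ∈ S, x i = a i) (fun x _ => Finset.mem_univ _)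
      have hfil : ∀ v : Fin q,
          ((C.filter fun x => ∀ i ∈ S, x i = a i).filter fun x => x j = v)
            = C.filter fun x => ∀ i ∈ insert j S, x i = Function.update a j v i := by
        intro v
        rw [Finset.filter_filter]
        apply Finset.filter_congr
        intro x _
        constructor
        · rintro ⟨h1, h2⟩ i hi
          rcases Finset.mem_insert.mp hi with rfl | hiS
          · rw [Function.update_self]; exact h2
          · rw [Function.update_of_ne (by rintro rfl; exact hjS hiS)]; exact h1 i hiS
        · intro hall
          constructor
          · intro i hiS
            have := hall i (Finset.mem_insert_of_mem hiS)
            rwa [Function.update_of_ne (by rintro rfl; exact hjS hiS)] at this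
          · have := hall j (Finset.mem_insert_self j S)
            rwa [Function.update_self] at this
      have hcast : ((C.filter fun x => ∀ i ∈ S, x i = a i).card : ℝ)
          = ∑ v : Fin q, ((C.filter fun x => ∀ i ∈ insert j S, x i = Function.update a j v i).card : ℝ) := by
        rw [hfib]
        push_cast
        exact Finset.sum_congr rfl fun v _ => by rw [hfil v]
      rw [hcast]
      have hins : ∀ v : Fin q,
          ((C.filter fun x => ∀ i ∈ insert j S, x i = Function.update a j v i).card : ℝ)
            = (C.card : ℝ) / (q:ℝ) ^ (S.card + 1) := by
        intro v
        have hcardins : (insert j S).card = S.card + 1 := Finset.card_insert_of_notMem hjS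
        have h2 : (insert j S).card + m = τ := by clear hfib hfil hcast; rw [hcardins]; omega
        have := ih (insert j S) h2 (Function.update a j v)
        rwa [hcardins] at this
      rw [Finset.sum_congr rfl fun v _ => hins v, Finset.sum_const, Finset.card_univ,
        Fintype.card_fin, nsmul_eq_mul, pow_succ]
      field_simp
  -- setup
  obtain ⟨y, hy⟩ := hCne
  set A : (Fin n → Fin q) → ℕ := fun x => (Finset.univ.filter fun i => x i = y i).card with hA
  have hAle : ∀ x, A x ≤ n := by
    intro x
    calc A x ≤ (Finset.univ : Finset (Fin n)).card := Finset.card_filter_le _ _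
      _ = n := by rw [Finset.card_univ, Fintype.card_fin]
  set g : Polynomial ℝ := f.comp (Polynomial.C (2 / (n:ℝ)) * Polynomial.X - 1) with hg
  have hgdeg : g.natDegree ≤ τ := by
    refine le_trans (Polynomial.natDegree_comp_le) ?_
    have h1 : (Polynomial.C (2 / (n:ℝ)) * Polynomial.X - 1).natDegree ≤ 1 := by
      refine le_trans (Polynomial.natDegree_sub_le _ _) ?_
      simp only [max_le_iff]
      constructor
      · exact le_trans (Polynomial.natDegree_C_mul_le _ _) (by simp)
      · simp
    calc f.natDegree * _ ≤ τ * 1 := Nat.mul_le_mul hdeg h1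
      _ = τ := mul_one τ
  have hgeval : ∀ a : ℕ, a ≤ n → g.eval (a : ℝ) = f.eval (1 - 2 * ((n - a : ℕ) : ℝ) / n) := by
    intro a ha
    rw [hg, Polynomial.eval_comp]
    congr 1
    simp only [Polynomial.eval_sub, Polynomial.eval_mul, Polynomial.eval_C, Polynomial.eval_X,
      Polynomial.eval_one]
    rw [Nat.cast_sub ha]
    field_simp
    ring
  have hgeval' : ∀ ℓ : ℕ, ℓ ≤ n → f.eval (1 - 2*(ℓ:ℝ)/n) = g.eval (((n - ℓ : ℕ) : ℝ)) := by
    intro ℓ hℓ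
    rw [hgeval (n - ℓ) (Nat.sub_le n ℓ), Nat.sub_sub_self hℓ]
  obtain ⟨c, hcc⟩ := lp_choose_basis τ g hgdeg
  -- Step B
  have sumChoose : ∀ k, k ≤ τ →
      ∑ x ∈ C, ((A x).choose k : ℝ) = (n.choose k : ℝ) * ((C.card : ℝ) / (q:ℝ) ^ k) := by
    intro k hk
    have hpow : ∀ x : Fin n → Fin q, ((A x).choose k : ℝ)
        = ((((Finset.univ : Finset (Fin n)).powersetCard k).filter
            fun S => ∀ i ∈ S, x i = y i).card : ℝ) := by
      intro x
      congr 1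
      rw [hA]
      simp only []
      rw [← Finset.card_powersetCard]
      congr 1
      ext T
      simp only [Finset.mem_powersetCard, Finset.mem_filter]
      constructor
      · rintro ⟨hsub, hcard⟩
        exact ⟨⟨Finset.subset_univ T, hcard⟩, fun i hi => (Finset.mem_filter.mp (hsub hi)).2⟩
      · rintro ⟨⟨-, hcard⟩, hall⟩
        exact ⟨fun i hi => Finset.mem_filter.mpr ⟨Finset.mem_univ i, hall i hi⟩, hcard⟩
    calc ∑ x ∈ C, ((A x).choose k : ℝ)
        = ∑ x ∈ C, ∑ T ∈ (Finset.univ : Finset (Fin n)).powersetCard k,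
            (if ∀ i ∈ T, x i = y i then (1:ℝ) else 0) := by
          refine Finset.sum_congr rfl fun x _ => ?_
          rw [hpow x, ← Finset.sum_boole]
      _ = ∑ T ∈ (Finset.univ : Finset (Fin n)).powersetCard k, ∑ x ∈ C,
            (if ∀ i ∈ T, x i = y i then (1:ℝ) else 0) := Finset.sum_comm
      _ = ∑ T ∈ (Finset.univ : Finset (Fin n)).powersetCard k,
            ((C.filter fun x => ∀ i ∈ T, x i = y i).card : ℝ) := by
          refine Finset.sum_congr rfl fun T _ => ?_
          rw [Finset.card_filter]
          push_cast [apply_ite (Nat.cast : ℕ → ℝ)]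
          rfl
      _ = ∑ T ∈ (Finset.univ : Finset (Fin n)).powersetCard k, (C.card : ℝ) / (q:ℝ)^k := by
          refine Finset.sum_congr rfl fun T hT => ?_
          have hTcard : T.card = k := (Finset.mem_powersetCard.mp hT).2
          have := strength (τ - k) T (by omega) y
          rwa [hTcard] at this
      _ = (n.choose k : ℝ) * ((C.card:ℝ)/(q:ℝ)^k) := by
          rw [Finset.sum_const, Finset.card_powersetCard, Finset.card_univ, Fintype.card_fin,
            nsmul_eq_mul]
  -- key design sum
  have hCkey : ∑ x ∈ C, g.eval ((A x : ℕ) : ℝ)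
      = ∑ k ∈ Finset.range (τ + 1), c k * ((n.choose k : ℝ) * ((C.card : ℝ)/(q:ℝ)^k)) := by
    rw [Finset.sum_congr rfl fun x (_ : x ∈ C) => hcc (A x), Finset.sum_comm]
    refine Finset.sum_congr rfl fun k hk => ?_
    rw [Finset.mem_range] at hk
    rw [← Finset.mul_sum, sumChoose k (by omega)]
  -- f0 identity
  have hf0key : fZeroHamming n q f * (q:ℝ)^n
      = ∑ k ∈ Finset.range (τ + 1), c k * ((n.choose k : ℝ) * (q:ℝ)^(n - k)) := by
    have hqpow : ((q:ℝ))^n ≠ 0 := by positivity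
    rw [fZeroHamming, div_mul_cancel₀ _ hqpow]
    calc ∑ ℓ ∈ Finset.range (n+1), (n.choose ℓ:ℝ) * ((q:ℝ)-1)^ℓ * f.eval (1 - 2*(ℓ:ℝ)/n)
        = ∑ ℓ ∈ Finset.range (n+1), ∑ k ∈ Finset.range (τ+1),
            (n.choose ℓ:ℝ) * ((q:ℝ)-1)^ℓ * (c k * (((n-ℓ).choose k : ℝ))) := by
          refine Finset.sum_congr rfl fun ℓ hℓ => ?_
          rw [Finset.mem_range] at hℓ
          rw [hgeval' ℓ (by omega), hcc (n - ℓ), Finset.mul_sum]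
      _ = ∑ k ∈ Finset.range (τ+1), c k * ∑ ℓ ∈ Finset.range (n+1),
            (n.choose ℓ:ℝ) * ((q:ℝ)-1)^ℓ * (((n-ℓ).choose k : ℝ)) := by
          rw [Finset.sum_comm]
          refine Finset.sum_congr rfl fun k _ => ?_
          rw [Finset.mul_sum]
          exact Finset.sum_congr rfl fun ℓ _ => by ring
      _ = ∑ k ∈ Finset.range (τ+1), c k * ((n.choose k : ℝ) * (q:ℝ)^(n - k)) := by
          refine Finset.sum_congr rfl fun k hk => ?_
          rw [Finset.mem_range] at hk
          rw [lp_sum_choose n k (by omega) ((q:ℝ)-1), sub_add_cancel]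
  -- main identity
  have hmain : ∑ x ∈ C, g.eval ((A x : ℕ) : ℝ) = (C.card : ℝ) * fZeroHamming n q f := by
    have hqn : (q:ℝ)^n ≠ 0 := by positivity
    have h1 : (C.card : ℝ) * fZeroHamming n q f
        = (C.card : ℝ) * (fZeroHamming n q f * (q:ℝ)^n) / (q:ℝ)^n := by
      field_simp
    rw [h1, hf0key, hCkey, Finset.mul_sum, Finset.sum_div]
    refine Finset.sum_congr rfl fun k hk => ?_
    rw [Finset.mem_range] at hk
    have hqk : (q:ℝ)^k ≠ 0 := by positivity
    have hpowdiv : (q:ℝ)^(n-k) / (q:ℝ)^n = 1 / (q:ℝ)^k := by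
      rw [div_eq_div_iff hqn hqk, ← pow_add, one_mul]
      congr 1
      omega
    calc c k * ((n.choose k : ℝ) * ((C.card : ℝ)/(q:ℝ)^k))
        = (C.card : ℝ) * c k * (n.choose k : ℝ) * (1 / (q:ℝ)^k) := by ring
      _ = (C.card : ℝ) * c k * (n.choose k : ℝ) * ((q:ℝ)^(n-k) / (q:ℝ)^n) := by rw [hpowdiv]
      _ = (C.card : ℝ) * (c k * ((n.choose k : ℝ) * (q:ℝ)^(n-k))) / (q:ℝ)^n := by ring
  -- positivity
  have hlow : f.eval 1 ≤ ∑ x ∈ C, g.eval ((A x : ℕ) : ℝ) := by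
    have hterm : ∀ x ∈ C, 0 ≤ g.eval ((A x : ℕ) : ℝ) := by
      intro x _
      rw [hgeval (A x) (hAle x)]
      exact hB1 (n - A x) (Nat.sub_le n (A x))
    have hAy : A y = n := by
      simp [hA]
    calc f.eval 1 = g.eval ((A y : ℕ) : ℝ) := by
          rw [hAy, hgeval n le_rfl, Nat.sub_self]
          norm_num
      _ ≤ _ := Finset.single_le_sum hterm hy
  rw [div_le_iff₀ hf0, ← hmain]
  exact hlow
end

section
/- Let n ≥ 2 and q ≥ 2 be integers, let h be a real-valued function defined on {1 - 2ℓ/n : ℓ = 1,…,n}, and let f : ℝ → ℝ be a real polynomial such that (i) f(1 - 2ℓ/n) ≤ h(1 - 2ℓ/n) for every integer ℓ with 1 ≤ ℓ ≤ n; and (ii) for every subset C' ⊆ H(n,q) one has ∑_{x,y ∈ C'} f(1 - 2·d_H(x,y)/n) ≥ f₀·|C'|² (sum over all ordered pairs, including x = y), where f₀ := q^{-n} ∑_{ℓ=0}^{n} C(n,ℓ)(q-1)^ℓ f(1 - 2ℓ/n). Then every code C ⊆ H(n,q) with |C| = M ≥ 2 satisfies ∑_{x,y ∈ C, x ≠ y}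 h(1 - 2·d_H(x,y)/n) ≥ f₀·M² − M·f(1). -/
/-- The `h`-energy of a code `C ⊆ H(n,q)`: the sum of `h(1 - 2 d_H(x,y)/n)` over ordered
pairs of distinct codewords of `C`. -/
noncomputable def hammingEnergy (n q : ℕ) (h : ℝ → ℝ) (C : Finset (Fin n → Fin q)) : ℝ :=
  ∑ p ∈ C.offDiag, h (1 - 2 * (hammingDist p.1 p.2 : ℝ) / n)

theorem Finset.sum_sum_eq_sum_diag_add_sum_offDiag {α β : Type*} [DecidableEq α]
    [AddCommMonoid β] (s : Finset α) (g : α → α → β) :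
    ∑ x ∈ s, ∑ y ∈ s, g x y = ∑ x ∈ s, g x x + ∑ p ∈ s.offDiag, g p.1 p.2 := by
  rw [← Finset.sum_product', ← Finset.diag_union_offDiag s,
    Finset.sum_union (Finset.disjoint_diag_offDiag s), Finset.sum_diag]

theorem sum_sum_eval_hammingKernel {n q : ℕ} (f : Polynomial ℝ) (C : Finset (Fin n → Fin q)) :
    ∑ x ∈ C, ∑ y ∈ C, f.eval (1 - 2 * (hammingDist x y : ℝ) / n) =
      C.card * f.eval 1 + ∑ p ∈ C.offDiag, f.eval (1 - 2 * (hammingDist p.1 p.2 : ℝ) / n) := by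
  rw [Finset.sum_sum_eq_sum_diag_add_sum_offDiag]
  simp [hammingDist_self]

theorem sum_offDiag_eval_le_hammingEnergy {n q : ℕ} {h : ℝ → ℝ} {f : Polynomial ℝ}
    (hfh : ∀ ℓ : ℕ, 1 ≤ ℓ → ℓ ≤ n → f.eval (1 - 2 * (ℓ : ℝ) / n) ≤ h (1 - 2 * (ℓ : ℝ) / n))
    (C : Finset (Fin n → Fin q)) :
    ∑ p ∈ C.offDiag, f.eval (1 - 2 * (hammingDist p.1 p.2 : ℝ) / n) ≤ hammingEnergy n q h C := by
  refine Finset.sum_le_sum fun p hp => hfh _ ?_ ?_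
  · exact hammingDist_pos.mpr (Finset.mem_offDiag.mp hp).2.2
  · simpa using hammingDist_le_card_fintype (x := p.1) (y := p.2)

theorem lp_lower_bound_energy_hamming_general
    (n q : ℕ) (h : ℝ → ℝ) (f : Polynomial ℝ)
    (hC1 : ∀ ℓ : ℕ, 1 ≤ ℓ → ℓ ≤ n →
      f.eval (1 - 2 * (ℓ : ℝ) / n) ≤ h (1 - 2 * (ℓ : ℝ) / n))
    (hA2 : ∀ C' : Finset (Fin n → Fin q),
      fZeroHamming n q f * (C'.card : ℝ) ^ 2 ≤
        ∑ x ∈ C', ∑ y ∈ C', f.eval (1 - 2 * (hammingDist x y : ℝ) / n))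
    (M : ℕ)
    (C : Finset (Fin n → Fin q)) (hcard : C.card = M) :
    fZeroHamming n q f * (M : ℝ) ^ 2 - (M : ℝ) * f.eval 1 ≤ hammingEnergy n q h C := by
  have hpos := hA2 C
  rw [sum_sum_eval_hammingKernel, hcard] at hpos
  linarith [sum_offDiag_eval_le_hammingEnergy hC1 C]

/-- The linear programming lower bound for the minimal energy of codes in Hamming space. -/
theorem lp_lower_bound_energy_hamming
    (n q : ℕ) (hn : 2 ≤ n) (hq : 2 ≤ q) (h : ℝ → ℝ) (f : Polynomial ℝ)
    (hC1 : ∀ ℓ : ℕ, 1 ≤ ℓ → ℓ ≤ n →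
      f.eval (1 - 2 * (ℓ : ℝ) / n) ≤ h (1 - 2 * (ℓ : ℝ) / n))
    (hA2 : ∀ C' : Finset (Fin n → Fin q),
      fZeroHamming n q f * (C'.card : ℝ) ^ 2 ≤
        ∑ x ∈ C', ∑ y ∈ C', f.eval (1 - 2 * (hammingDist x y : ℝ) / n))
    (M : ℕ) (hM : 2 ≤ M)
    (C : Finset (Fin n → Fin q)) (hcard : C.card = M) :
    fZeroHamming n q f * (M : ℝ) ^ 2 - (M : ℝ) * f.eval 1 ≤ hammingEnergy n q h C :=
  lp_lower_bound_energy_hamming_general n q h f hC1 hA2 M C hcard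
end

section
/- Let n ≥ 2 and let s ∈ [−1, 1/n). Then every finite set C ⊆ S^{n−1} with ⟨x,y⟩ ≤ s for all distinct x,y ∈ C has cardinality |C| ≤ 2n(1−s)/(1−ns). -/
/-!
The polynomial `f(t) = (t + 1)(t - s)` is nonpositive on `[-1, s]`, so summing it over all pairs
of a code `C` leaves at most the diagonal: `∑_{x,y} f⟪x,y⟫ ≤ |C| f(1) = 2(1 - s)|C|`. Expanding `f`,
the linear part `∑_{x,y} ⟪x,y⟫ = ‖∑ x‖²` is nonnegative, and the quadratic part
`∑_{x,y} ⟪x,y⟫²` is the squared Hilbert–Schmidt norm of the frame operator `S = ∑ x ⊗ x`, which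
is at least `(tr S)² / n = |C|² / n` by Cauchy–Schwarz. Hence `|C|² / n - s|C|² ≤ 2(1 - s)|C|`.
-/

open scoped RealInnerProductSpace
open Finset Module

section

variable {E : Type*} [NormedAddCommGroup E] [InnerProductSpace ℝ E]

theorem sum_sum_inner_nonneg (C : Finset E) : 0 ≤ ∑ x ∈ C, ∑ y ∈ C, ⟪x, y⟫ := by
  convert real_inner_self_nonneg (x := ∑ x ∈ C, x) using 1
  simp_rw [sum_inner, inner_sum]

theorem sum_sum_inner_sq_eq_sum_sum_sq {ι : Type*} [Fintype ι] (b : OrthonormalBasis ι ℝ E)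
    (C : Finset E) :
    ∑ x ∈ C, ∑ y ∈ C, ⟪x, y⟫ ^ 2 =
      ∑ i, ∑ j, (∑ x ∈ C, ⟪x, b i⟫ * ⟪x, b j⟫) ^ 2 := by
  have hexpand (x y : E) : ∑ i, ⟪x, b i⟫ * ⟪y, b i⟫ = ⟪x, y⟫ := by
    simp_rw [real_inner_comm (b _) y, b.sum_inner_mul_inner]
  calc ∑ x ∈ C, ∑ y ∈ C, ⟪x, y⟫ ^ 2
      = ∑ x ∈ C, ∑ y ∈ C, (∑ i, ⟪x, b i⟫ * ⟪y, b i⟫) ^ 2 := by simp only [hexpand]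
    _ = ∑ i, ∑ j, (∑ x ∈ C, ⟪x, b i⟫ * ⟪x, b j⟫) ^ 2 := by
      simp only [sq, sum_mul_sum, sum_comm (s := (univ : Finset ι)) (t := C)]
      exact sum_congr rfl fun _ _ => sum_congr rfl fun _ _ => sum_congr rfl fun _ _ =>
        sum_congr rfl fun _ _ => by ring

theorem sq_sum_norm_sq_le_finrank_mul_sum_sum_inner_sq [FiniteDimensional ℝ E] (C : Finset E) :
    (∑ x ∈ C, ‖x‖ ^ 2) ^ 2 ≤ finrank ℝ E * ∑ x ∈ C, ∑ y ∈ C, ⟪x, y⟫ ^ 2 := by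
  set b := stdOrthonormalBasis ℝ E
  set S : Fin (finrank ℝ E) → Fin (finrank ℝ E) → ℝ := fun i j => ∑ x ∈ C, ⟪x, b i⟫ * ⟪x, b j⟫
  have htrace : ∑ i, S i i = ∑ x ∈ C, ‖x‖ ^ 2 := by
    simp_rw [S, ← b.sum_sq_inner_left, ← sq]
    exact sum_comm
  calc (∑ x ∈ C, ‖x‖ ^ 2) ^ 2 = (∑ i, S i i) ^ 2 := by rw [htrace]
    _ ≤ finrank ℝ E * ∑ i, S i i ^ 2 := by
      simpa using sq_sum_le_card_mul_sum_sq (s := univ) (f := fun i => S i i)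
    _ ≤ finrank ℝ E * ∑ i, ∑ j, S i j ^ 2 := by
      gcongr with i
      exact single_le_sum (f := fun j => S i j ^ 2) (fun j _ => sq_nonneg _) (mem_univ i)
    _ = finrank ℝ E * ∑ x ∈ C, ∑ y ∈ C, ⟪x, y⟫ ^ 2 := by
      rw [sum_sum_inner_sq_eq_sum_sum_sq b]

variable {C : Finset E} {s : ℝ}

theorem sum_sum_le_card_mul_of_nonpos (hC : (C : Set E) ⊆ Metric.sphere 0 1)
    (hsep : ∀ x ∈ C, ∀ y ∈ C, x ≠ y → ⟪x, y⟫ ≤ s) {f : ℝ → ℝ} (hf : ∀ t ∈ Set.Icc (-1) s, f t ≤ 0) :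
    ∑ x ∈ C, ∑ y ∈ C, f ⟪x, y⟫ ≤ #C * f 1 := by
  classical
  have hnorm : ∀ x ∈ C, ‖x‖ = 1 := fun x hx => mem_sphere_zero_iff_norm.mp (hC hx)
  have hrow : ∀ x ∈ C, ∑ y ∈ C, f ⟪x, y⟫ ≤ f 1 := by
    intro x hx
    rw [← add_sum_erase C _ hx, real_inner_self_eq_norm_sq, hnorm x hx, one_pow]
    refine add_le_of_nonpos_right (sum_nonpos fun y hy => hf _ ⟨?_, ?_⟩)
    · have := neg_le_of_abs_le (abs_real_inner_le_norm x y)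
      rwa [hnorm x hx, hnorm y (mem_of_mem_erase hy), one_mul] at this
    · exact hsep x hx y (mem_of_mem_erase hy) (ne_of_mem_erase hy).symm
  simpa using sum_le_sum hrow

theorem sum_sum_inner_sq_add_mul_sum_sum_inner_le (hC : (C : Set E) ⊆ Metric.sphere 0 1)
    (hsep : ∀ x ∈ C, ∀ y ∈ C, x ≠ y → ⟪x, y⟫ ≤ s) :
    ∑ x ∈ C, ∑ y ∈ C, ⟪x, y⟫ ^ 2 + (1 - s) * ∑ x ∈ C, ∑ y ∈ C, ⟪x, y⟫ - s * #C ^ 2 ≤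
      2 * (1 - s) * #C := by
  have hLP := sum_sum_le_card_mul_of_nonpos (f := fun t => (t + 1) * (t - s)) hC hsep
    fun t ht => mul_nonpos_of_nonneg_of_nonpos (by linarith [ht.1]) (by linarith [ht.2])
  simp only [show ∀ t, (t + 1) * (t - s) = t ^ 2 + (1 - s) * t - s from fun t => by ring,
    sum_sub_distrib, sum_add_distrib, ← mul_sum, sum_const, nsmul_eq_mul] at hLP
  linarith

end

theorem levenshtein_second_bound_sphere_general
    (n : ℕ) (s : ℝ) (hs : s ∈ Set.Ico (-1 : ℝ) (1 / n))
    (C : Finset (EuclideanSpace ℝ (Fin n)))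
    (hC : (C : Set (EuclideanSpace ℝ (Fin n))) ⊆ Metric.sphere 0 1)
    (hsep : ∀ x ∈ C, ∀ y ∈ C, x ≠ y → ⟪x, y⟫ ≤ s) :
    (C.card : ℝ) ≤ 2 * n * (1 - s) / (1 - n * s) := by
  set M : ℝ := (#C : ℝ)
  have hs1 : s < 1 := hs.2.trans_le (by simpa using Nat.cast_inv_le_one (α := ℝ) n)
  have hns : n * s < 1 := by
    rcases n.eq_zero_or_pos with rfl | hn
    · simp
    · simpa [mul_comm] using (lt_div_iff₀ (Nat.cast_pos.mpr hn)).mp hs.2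
  have hLP := sum_sum_inner_sq_add_mul_sum_sum_inner_le hC hsep
  have hQ₁ := mul_nonneg (sub_nonneg.mpr hs1.le) (sum_sum_inner_nonneg C)
  have hQ₂ := sq_sum_norm_sq_le_finrank_mul_sum_sum_inner_sq C
  rw [finrank_euclideanSpace_fin,
    sum_congr rfl fun x hx => by rw [mem_sphere_zero_iff_norm.mp (hC hx), one_pow],
    sum_const, nsmul_one] at hQ₂
  have key : M * (M * (1 - n * s)) ≤ M * (2 * n * (1 - s)) := by
    have hLPn := mul_le_mul_of_nonneg_left hLP (Nat.cast_nonneg n)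
    have hQ₁n := mul_nonneg (Nat.cast_nonneg n) hQ₁
    linarith
  rw [le_div_iff₀ (by linarith)]
  rcases (show (0 : ℝ) ≤ M by positivity).eq_or_lt with hM0 | hMpos
  · rw [← hM0, zero_mul]
    exact mul_nonneg (by positivity) (by linarith)
  · exact le_of_mul_le_mul_left key hMpos

/-- The second Levenshtein bound `L₂(n,s) = 2n(1-s)/(1-ns)` on the Euclidean sphere. -/
theorem levenshtein_second_bound_sphere
    (n : ℕ) (hn : 2 ≤ n) (s : ℝ) (hs : s ∈ Set.Ico (-1 : ℝ) (1 / n))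
    (C : Finset (EuclideanSpace ℝ (Fin n)))
    (hC : (C : Set (EuclideanSpace ℝ (Fin n))) ⊆ Metric.sphere 0 1)
    (hsep : ∀ x ∈ C, ∀ y ∈ C, x ≠ y → ⟪x, y⟫ ≤ s) :
    (C.card : ℝ) ≤ 2 * n * (1 - s) / (1 - n * s) :=
  levenshtein_second_bound_sphere_general n s hs C hC hsep
end
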